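/- arXiv:0711.3597 — 4 statements merged into one kernel-verified Lean document; each statement's English description precedes it below -/
import Mathlib

section
/- Let 0 ≤ α₀ ≤ α₁ ≤ 1, γ, p ∈ [0,1], and let C, D be as in the hidden Markov chain recursion. Then (1/2)(1 - C + √((2α₁ - (1-C))² - 4(D + α₁² - α₁(1-C)))) ≥ α₁. That is, the larger root of x² + (C-1)x + D = 0 is at least α₁. -/
theorem stmt_2 (α₀ α₁ γ p : ℝ)
    (h0 : 0 ≤ α₀) (h01 : α₀ ≤ α₁) (h1 : α₁ ≤ 1)
    (hγ : γ ∈ Set.Icc (0:ℝ) 1) (hp : p ∈ Set.Icc (0:ℝ) 1)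
    (C D : ℝ)
    (hC : C = (1 - α₀ - α₁) - γ * (1 - α₀ - (1 - p) * (α₁ - α₀)))
    (hD : D = α₀ * α₁ + γ * (α₁ * (1 - α₀) - (1 - p) * (α₁ - α₀))) :
    (1 / 2) * (1 - C + Real.sqrt ((2 * α₁ - (1 - C)) ^ 2
        - 4 * (D + α₁ ^ 2 - α₁ * (1 - C)))) ≥ α₁ := by
  obtain ⟨hγ0, hγ1⟩ := hγ
  obtain ⟨hp0, hp1⟩ := hp
  have hkey : D + α₁ ^ 2 - α₁ * (1 - C) = -(γ * (1 - p) * (α₁ - α₀) * (1 - α₁)) := by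
    subst hC hD; ring
  have hnn : 0 ≤ γ * (1 - p) * (α₁ - α₀) * (1 - α₁) := mul_nonneg (mul_nonneg (mul_nonneg hγ0 (by linarith)) (by linarith)) (by linarith)
  have h2 : (2 * α₁ - (1 - C)) ^ 2 ≤ (2 * α₁ - (1 - C)) ^ 2
      - 4 * (D + α₁ ^ 2 - α₁ * (1 - C)) := by
    rw [hkey]; nlinarith
  have h3 : 2 * α₁ - (1 - C) ≤ Real.sqrt ((2 * α₁ - (1 - C)) ^ 2
      - 4 * (D + α₁ ^ 2 - α₁ * (1 - C))) := by
    calc 2 * α₁ - (1 - C) ≤ |2 * α₁ - (1 - C)| := le_abs_self _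
      _ = Real.sqrt ((2 * α₁ - (1 - C)) ^ 2) := (Real.sqrt_sq_eq_abs _).symm
      _ ≤ _ := Real.sqrt_le_sqrt h2
  linarith
end

section
/- Define λ̄(α₀, α₁, γ, p) := (1/2)(α₀ + α₁ + γ - √((α₁ - α₀ - γ)² + 4γ(1-p)(α₁ - α₀))) for 0 ≤ α₀ ≤ α₁, γ > 0, p ∈ [0,1]. Then λ̄ is nondecreasing in p, with λ̄(α₀, α₁, γ, 1) = min(α₁, α₀ + γ) and λ̄ ≤ min(α₁, α₀ + γ) for all p. -/
theorem stmt_6 (α₀ α₁ γ : ℝ)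
    (h0 : 0 ≤ α₀) (h01 : α₀ ≤ α₁) (hγ : 0 < γ) :
    (∀ p q : ℝ, p ∈ Set.Icc (0:ℝ) 1 → q ∈ Set.Icc (0:ℝ) 1 → p ≤ q →
      (1 / 2) * (α₀ + α₁ + γ - Real.sqrt ((α₁ - α₀ - γ) ^ 2 + 4 * γ * (1 - p) * (α₁ - α₀)))
        ≤ (1 / 2) * (α₀ + α₁ + γ - Real.sqrt ((α₁ - α₀ - γ) ^ 2 + 4 * γ * (1 - q) * (α₁ - α₀)))) ∧
    (1 / 2) * (α₀ + α₁ + γ - Real.sqrt ((α₁ - α₀ - γ) ^ 2 + 4 * γ * (1 - 1) * (α₁ - α₀)))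
      = min α₁ (α₀ + γ) ∧
    (∀ p : ℝ, p ∈ Set.Icc (0:ℝ) 1 →
      (1 / 2) * (α₀ + α₁ + γ - Real.sqrt ((α₁ - α₀ - γ) ^ 2 + 4 * γ * (1 - p) * (α₁ - α₀)))
        ≤ min α₁ (α₀ + γ)) := by
  have hd : 0 ≤ α₁ - α₀ := by linarith
  have hmono : ∀ p q : ℝ, p ∈ Set.Icc (0:ℝ) 1 → q ∈ Set.Icc (0:ℝ) 1 → p ≤ q →
      (1 / 2) * (α₀ + α₁ + γ - Real.sqrt ((α₁ - α₀ - γ) ^ 2 + 4 * γ * (1 - p) * (α₁ - α₀)))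
        ≤ (1 / 2) * (α₀ + α₁ + γ - Real.sqrt ((α₁ - α₀ - γ) ^ 2 + 4 * γ * (1 - q) * (α₁ - α₀))) := by
    intro p q hp hq hpq
    have h1 : (α₁ - α₀ - γ) ^ 2 + 4 * γ * (1 - q) * (α₁ - α₀)
        ≤ (α₁ - α₀ - γ) ^ 2 + 4 * γ * (1 - p) * (α₁ - α₀) := by
      nlinarith [mul_nonneg (mul_nonneg (sub_nonneg.2 hpq) hd) hγ.le]
    have := Real.sqrt_le_sqrt h1
    nlinarith
  have heq : (1 / 2) * (α₀ + α₁ + γ - Real.sqrt ((α₁ - α₀ - γ) ^ 2 + 4 * γ * (1 - 1) * (α₁ - α₀)))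
      = min α₁ (α₀ + γ) := by
    have : Real.sqrt ((α₁ - α₀ - γ) ^ 2 + 4 * γ * (1 - 1) * (α₁ - α₀)) = |α₁ - α₀ - γ| := by
      rw [show (α₁ - α₀ - γ) ^ 2 + 4 * γ * (1 - 1) * (α₁ - α₀) = (α₁ - α₀ - γ) ^ 2 by ring]
      exact Real.sqrt_sq_eq_abs _
    rw [this]
    rcases le_total α₁ (α₀ + γ) with h | h
    · rw [min_eq_left h, abs_of_nonpos (by linarith)]; ring
    · rw [min_eq_right h, abs_of_nonneg (by linarith)]; ring
  refine ⟨hmono, heq, fun p hp => ?_⟩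
  calc _ ≤ (1 / 2) * (α₀ + α₁ + γ - Real.sqrt ((α₁ - α₀ - γ) ^ 2 + 4 * γ * (1 - 1) * (α₁ - α₀))) :=
        hmono p 1 hp (by norm_num) hp.2
    _ = min α₁ (α₀ + γ) := heq
end

section
/- For fixed 0 ≤ α₀ ≤ α₁ and p ∈ [0,1], the function γ ↦ λ̄(α₀, α₁, γ, p) := (1/2)(α₀ + α₁ + γ - √((α₁ - α₀ - γ)² + 4γ(1-p)(α₁ - α₀))) is nondecreasing on (0, ∞). -/
theorem stmt_8 (α₀ α₁ p : ℝ)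
    (h0 : 0 ≤ α₀) (h01 : α₀ ≤ α₁) (hp : p ∈ Set.Icc (0:ℝ) 1) :
    ∀ γ₁ γ₂ : ℝ, 0 < γ₁ → γ₁ ≤ γ₂ →
      (1 / 2) * (α₀ + α₁ + γ₁ - Real.sqrt ((α₁ - α₀ - γ₁) ^ 2 + 4 * γ₁ * (1 - p) * (α₁ - α₀)))
        ≤ (1 / 2) * (α₀ + α₁ + γ₂
            - Real.sqrt ((α₁ - α₀ - γ₂) ^ 2 + 4 * γ₂ * (1 - p) * (α₁ - α₀))) := by
  obtain ⟨hp0, hp1⟩ := hp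
  intro γ₁ γ₂ hγ₁ h12
  have hd0 : (0:ℝ) ≤ α₁ - α₀ := by linarith
  have hq0 : (0:ℝ) ≤ 1 - p := by linarith
  have hA1 : (0:ℝ) ≤ (α₁ - α₀ - γ₁) ^ 2 + 4 * γ₁ * (1 - p) * (α₁ - α₀) := by positivity
  have key1 : γ₁ - (α₁ - α₀) + 2 * (1 - p) * (α₁ - α₀)
      ≤ Real.sqrt ((α₁ - α₀ - γ₁) ^ 2 + 4 * γ₁ * (1 - p) * (α₁ - α₀)) := by
    have h1 : (γ₁ - (α₁ - α₀) + 2 * (1 - p) * (α₁ - α₀)) ^ 2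
        ≤ (α₁ - α₀ - γ₁) ^ 2 + 4 * γ₁ * (1 - p) * (α₁ - α₀) := by
      nlinarith [mul_nonneg (mul_nonneg hq0 hp0) (sq_nonneg (α₁ - α₀))]
    calc γ₁ - (α₁ - α₀) + 2 * (1 - p) * (α₁ - α₀)
        ≤ |γ₁ - (α₁ - α₀) + 2 * (1 - p) * (α₁ - α₀)| := le_abs_self _
      _ = Real.sqrt ((γ₁ - (α₁ - α₀) + 2 * (1 - p) * (α₁ - α₀)) ^ 2) :=
          (Real.sqrt_sq_eq_abs _).symm
      _ ≤ _ := Real.sqrt_le_sqrt h1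
  have hs1 := Real.sqrt_nonneg ((α₁ - α₀ - γ₁) ^ 2 + 4 * γ₁ * (1 - p) * (α₁ - α₀))
  have hsq := Real.sq_sqrt hA1
  have h21 : (0:ℝ) ≤ γ₂ - γ₁ := by linarith
  have key2 : Real.sqrt ((α₁ - α₀ - γ₂) ^ 2 + 4 * γ₂ * (1 - p) * (α₁ - α₀))
      ≤ Real.sqrt ((α₁ - α₀ - γ₁) ^ 2 + 4 * γ₁ * (1 - p) * (α₁ - α₀)) + (γ₂ - γ₁) := by
    have h2 : (α₁ - α₀ - γ₂) ^ 2 + 4 * γ₂ * (1 - p) * (α₁ - α₀)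
        ≤ (Real.sqrt ((α₁ - α₀ - γ₁) ^ 2 + 4 * γ₁ * (1 - p) * (α₁ - α₀)) + (γ₂ - γ₁)) ^ 2 := by
      nlinarith [mul_le_mul_of_nonneg_left key1 h21]
    calc Real.sqrt ((α₁ - α₀ - γ₂) ^ 2 + 4 * γ₂ * (1 - p) * (α₁ - α₀))
        ≤ Real.sqrt ((Real.sqrt ((α₁ - α₀ - γ₁) ^ 2 + 4 * γ₁ * (1 - p) * (α₁ - α₀)) + (γ₂ - γ₁)) ^ 2) :=
          Real.sqrt_le_sqrt h2
      _ = _ := Real.sqrt_sq (by linarith)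
  linarith
end

section
/- Let m ∈ ℕ with m large enough that α₀/m, α₁/m, γ/m ∈ (0,1). Let λ̄(a₀,a₁,g,p) := (1/2)(a₀+a₁+g - √((a₀+a₁+g)² - 4(a₀a₁ + g(a₀ + p(a₁-a₀))))). Then lim_{m→∞} m · λ̄(α₀/m, α₁/m, γ/m, p) = (1/2)(α₀ + α₁ + γ - √((α₁ - α₀ - γ)² + 4γ(1-p)(α₁ - α₀))). -/
/-!
`λ̄` is positively homogeneous of degree one (its discriminant scales by `c²`), so
`m · λ̄(α₀/m, α₁/m, γ/m, p) = λ̄(α₀, α₁, γ, p)` for every `m ≥ 1`: the sequence is eventually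
constant, and only the discriminant of the limit has to be rewritten.
-/

open Filter

/-- The dominated Poisson intensity `λ̄(a₀, a₁, g, p)`. -/
noncomputable def dominatedIntensity (a₀ a₁ g p : ℝ) : ℝ :=
  (1 / 2) * (a₀ + a₁ + g - Real.sqrt ((a₀ + a₁ + g) ^ 2 - 4 * (a₀ * a₁ + g * (a₀ + p * (a₁ - a₀)))))

theorem dominatedIntensity_const_mul (a₀ a₁ g p : ℝ) {c : ℝ} (hc : 0 ≤ c) :
    dominatedIntensity (c * a₀) (c * a₁) (c * g) p = c * dominatedIntensity a₀ a₁ g p := by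
  have hdisc : (c * a₀ + c * a₁ + c * g) ^ 2
      - 4 * (c * a₀ * (c * a₁) + c * g * (c * a₀ + p * (c * a₁ - c * a₀)))
      = c ^ 2 * ((a₀ + a₁ + g) ^ 2 - 4 * (a₀ * a₁ + g * (a₀ + p * (a₁ - a₀)))) := by
    ring
  rw [dominatedIntensity, dominatedIntensity, hdisc, Real.sqrt_mul (sq_nonneg c), Real.sqrt_sq hc]
  ring

theorem dominatedIntensity_discriminant (a₀ a₁ g p : ℝ) :
    (a₀ + a₁ + g) ^ 2 - 4 * (a₀ * a₁ + g * (a₀ + p * (a₁ - a₀)))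
      = (a₁ - a₀ - g) ^ 2 + 4 * g * (1 - p) * (a₁ - a₀) := by
  ring

theorem stmt_11_general (α₀ α₁ γ p : ℝ) :
    Filter.Tendsto
      (fun m : ℕ =>
        (m : ℝ) * ((1 / 2) * (α₀ / m + α₁ / m + γ / m
          - Real.sqrt ((α₀ / m + α₁ / m + γ / m) ^ 2
            - 4 * ((α₀ / m) * (α₁ / m)
              + (γ / m) * (α₀ / m + p * (α₁ / m - α₀ / m)))))))
      Filter.atTop
      (nhds ((1 / 2) * (α₀ + α₁ + γ
        - Real.sqrt ((α₁ - α₀ - γ) ^ 2 + 4 * γ * (1 - p) * (α₁ - α₀))))) := by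
  have hscale : ∀ᶠ m : ℕ in atTop, dominatedIntensity α₀ α₁ γ p
      = m * dominatedIntensity (α₀ / m) (α₁ / m) (γ / m) p := by
    filter_upwards [eventually_gt_atTop 0] with m hm_pos
    have hm : (m : ℝ) ≠ 0 := by exact_mod_cast hm_pos.ne'
    simpa [mul_div_cancel₀ _ hm] using
      dominatedIntensity_const_mul (α₀ / m) (α₁ / m) (γ / m) p m.cast_nonneg
  rw [← dominatedIntensity_discriminant]
  exact tendsto_const_nhds.congr' hscale

theorem stmt_11 (α₀ α₁ γ p : ℝ)
    (h0 : 0 ≤ α₀) (h01 : α₀ ≤ α₁) (hγ : 0 < γ) (hp : p ∈ Set.Icc (0:ℝ) 1) :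
    Filter.Tendsto
      (fun m : ℕ =>
        (m : ℝ) * ((1 / 2) * (α₀ / m + α₁ / m + γ / m
          - Real.sqrt ((α₀ / m + α₁ / m + γ / m) ^ 2
            - 4 * ((α₀ / m) * (α₁ / m)
              + (γ / m) * (α₀ / m + p * (α₁ / m - α₀ / m)))))))
      Filter.atTop
      (nhds ((1 / 2) * (α₀ + α₁ + γ
        - Real.sqrt ((α₁ - α₀ - γ) ^ 2 + 4 * γ * (1 - p) * (α₁ - α₀))))) :=
  stmt_11_general α₀ α₁ γ p
end
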